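/- arXiv:1511.08282 — 3 statements merged into one kernel-verified Lean document; each statement's English description precedes it below -/
import Mathlib

section
/- Let F_c, F_e : V → ℝ be convex differentiable functions on a real inner product space V, and set F = F_c − F_e. Then for all φ, ψ ∈ V: F(φ) − F(ψ) ≤ ⟨∇F_c(φ) − ∇F_e(ψ), φ − ψ⟩. -/
open scoped RealInnerProductSpace

/-! A convex differentiable function lies above its tangent planes:
`⟪∇F_c(φ), ψ - φ⟫ ≤ F_c(ψ) - F_c(φ)` and `⟪∇F_e(ψ), φ - ψ⟫ ≤ F_e(φ) - F_e(ψ)`. Adding the two gives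
the estimate. The tangent-plane bound reduces to one variable: on the segment from `x` to `y`,
the secant slope of a convex function over `[0, 1]` dominates its derivative at `0`. -/

theorem ConvexOn.le_sub_of_hasFDerivAt {E : Type*} [NormedAddCommGroup E] [NormedSpace ℝ E]
    {f : E → ℝ} {f' : E →L[ℝ] ℝ} {s : Set E} {x y : E} (hf : ConvexOn ℝ s f)
    (hx : x ∈ s) (hy : y ∈ s) (hf' : HasFDerivAt f f' x) :
    f' (y - x) ≤ f y - f x := by
  have hline : ConvexOn ℝ (AffineMap.lineMap x y ⁻¹' s) (f ∘ AffineMap.lineMap x y) :=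
    hf.comp_affineMap _
  have hderiv : HasDerivAt (f ∘ AffineMap.lineMap x y) (f' (y - x)) (0 : ℝ) :=
    hf'.comp_hasDerivAt_of_eq 0 AffineMap.hasDerivAt_lineMap
      (AffineMap.lineMap_apply_zero x y).symm
  simpa [slope_def_field] using
    hline.le_slope_of_hasDerivAt (by simpa using hx) (by simpa using hy) one_pos hderiv

theorem ConvexOn.inner_le_sub_of_hasGradientAt {E : Type*} [NormedAddCommGroup E]
    [InnerProductSpace ℝ E] [CompleteSpace E] {f : E → ℝ} {g x y : E} {s : Set E}
    (hf : ConvexOn ℝ s f) (hx : x ∈ s) (hy : y ∈ s) (hg : HasGradientAt f g x) :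
    ⟪g, y - x⟫ ≤ f y - f x :=
  hf.le_sub_of_hasFDerivAt hx hy hg.hasFDerivAt

theorem convex_splitting_estimate {V : Type*} [NormedAddCommGroup V]
    [InnerProductSpace ℝ V] [CompleteSpace V]
    (Fc Fe : V → ℝ) (gc ge : V → V)
    (hFc : ConvexOn ℝ Set.univ Fc) (hFe : ConvexOn ℝ Set.univ Fe)
    (hgc : ∀ x, HasGradientAt Fc (gc x) x) (hge : ∀ x, HasGradientAt Fe (ge x) x)
    (φ ψ : V) :
    (Fc φ - Fe φ) - (Fc ψ - Fe ψ) ≤ ⟪gc φ - ge ψ, φ - ψ⟫ := by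
  have hc : ⟪gc φ, ψ - φ⟫ ≤ Fc ψ - Fc φ :=
    hFc.inner_le_sub_of_hasGradientAt (Set.mem_univ _) (Set.mem_univ _) (hgc φ)
  have he : ⟪ge ψ, φ - ψ⟫ ≤ Fe φ - Fe ψ :=
    hFe.inner_le_sub_of_hasGradientAt (Set.mem_univ _) (Set.mem_univ _) (hge ψ)
  have hswap : ⟪gc φ, ψ - φ⟫ = -⟪gc φ, φ - ψ⟫ := by rw [← inner_neg_right, neg_sub]
  rw [inner_sub_left]
  linarith
end

section
/- Let L be a symmetric positive definite linear operator on a finite-dimensional real inner product space V, let F = F_c − F_e be a convex splitting with F_c, F_e convex and differentiable, and fix φᵏ ∈ V, s > 0. Then the convex-splitting scheme φᵏ⁺¹ = φᵏ − sL(∇F_c(φᵏ⁺¹) − ∇F_e(φᵏ)) (with L = −Δ_h interpreted as positive definite generator) satisfies the energy decay F(φᵏ⁺¹) ≤ F(φᵏ) for any s > 0. -/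
open scoped RealInnerProductSpace

/-! The first-order characterisation of convexity, applied to `F_c` at `φᵏ⁺¹` and to `F_e` at `φᵏ`,
bounds the energy change by `⟪μ, φᵏ⁺¹ - φᵏ⟫`, and the scheme turns this into `-s ⟪L μ, μ⟫ ≤ 0`. -/

theorem ConvexOn.fderiv_apply_sub_le {E : Type*} [NormedAddCommGroup E] [NormedSpace ℝ E]
    {s : Set E} {f : E → ℝ} {f' : E →L[ℝ] ℝ} {x y : E}
    (hf : ConvexOn ℝ s f) (hx : x ∈ s) (hy : y ∈ s) (hf' : HasFDerivAt f f' x) :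
    f' (y - x) ≤ f y - f x := by
  let c : ℝ →ᵃ[ℝ] E := AffineMap.lineMap x y
  have hderiv : HasDerivAt (f ∘ c) (f' (y - x)) 0 :=
    hf'.comp_hasDerivAt_of_eq (0 : ℝ) AffineMap.hasDerivAt_lineMap (by simp [c])
  have hslope := (hf.comp_affineMap c).le_slope_of_hasDerivAt
    (by simpa [c] using hx) (by simpa [c] using hy) one_pos hderiv
  simpa [slope_def_field, c] using hslope

theorem ConvexOn.inner_gradient_sub_le {E : Type*} [NormedAddCommGroup E]
    [InnerProductSpace ℝ E] [CompleteSpace E] {s : Set E} {f : E → ℝ} {g x y : E}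
    (hf : ConvexOn ℝ s f) (hx : x ∈ s) (hy : y ∈ s) (hg : HasGradientAt f g x) :
    ⟪g, y - x⟫ ≤ f y - f x :=
  hf.fderiv_apply_sub_le hx hy hg.hasFDerivAt

theorem sub_le_inner_of_convex_splitting {E : Type*} [NormedAddCommGroup E]
    [InnerProductSpace ℝ E] [CompleteSpace E] {s : Set E} {Fc Fe : E → ℝ} {gc ge φ ψ : E}
    (hFc : ConvexOn ℝ s Fc) (hFe : ConvexOn ℝ s Fe) (hφ : φ ∈ s) (hψ : ψ ∈ s)
    (hgc : HasGradientAt Fc gc φ) (hge : HasGradientAt Fe ge ψ) :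
    (Fc φ - Fe φ) - (Fc ψ - Fe ψ) ≤ ⟪gc - ge, φ - ψ⟫ := by
  have hc : ⟪gc, ψ - φ⟫ ≤ Fc ψ - Fc φ := hFc.inner_gradient_sub_le hφ hψ hgc
  have he : ⟪ge, φ - ψ⟫ ≤ Fe φ - Fe ψ := hFe.inner_gradient_sub_le hψ hφ hge
  rw [← neg_sub φ ψ, inner_neg_right] at hc
  rw [inner_sub_left]
  linarith

theorem convex_splitting_scheme_energy_decay_general {V : Type*} [NormedAddCommGroup V]
    [InnerProductSpace ℝ V] [FiniteDimensional ℝ V]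
    (L : V →ₗ[ℝ] V)
    (hpos : ∀ x : V, x ≠ 0 → 0 < ⟪L x, x⟫)
    (Fc Fe : V → ℝ) (gc ge : V → V)
    (hFc : ConvexOn ℝ Set.univ Fc) (hFe : ConvexOn ℝ Set.univ Fe)
    (hgc : ∀ x, HasGradientAt Fc (gc x) x) (hge : ∀ x, HasGradientAt Fe (ge x) x)
    (s : ℝ) (hs : 0 < s) (φk φk1 : V)
    (hscheme : φk1 = φk - s • L (gc φk1 - ge φk)) :
    Fc φk1 - Fe φk1 ≤ Fc φk - Fe φk := by
  set μ := gc φk1 - ge φk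
  have hsplit := sub_le_inner_of_convex_splitting hFc hFe (Set.mem_univ φk1) (Set.mem_univ φk)
    (hgc φk1) (hge φk)
  have hstep : ⟪μ, φk1 - φk⟫ = -(s * ⟪L μ, μ⟫) := by
    rw [hscheme, sub_sub_cancel_left, inner_neg_right, inner_smul_right, real_inner_comm]
  have hLμ : 0 ≤ ⟪L μ, μ⟫ := by
    rcases eq_or_ne μ 0 with hμ | hμ
    · simp [hμ]
    · exact (hpos μ hμ).le
  have hdissipation : 0 ≤ s * ⟪L μ, μ⟫ := mul_nonneg hs.le hLμ
  linarith

theorem convex_splitting_scheme_energy_decay {V : Type*} [NormedAddCommGroup V]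
    [InnerProductSpace ℝ V] [FiniteDimensional ℝ V]
    (L : V →ₗ[ℝ] V)
    (hsym : ∀ x y : V, ⟪L x, y⟫ = ⟪x, L y⟫)
    (hpos : ∀ x : V, x ≠ 0 → 0 < ⟪L x, x⟫)
    (Fc Fe : V → ℝ) (gc ge : V → V)
    (hFc : ConvexOn ℝ Set.univ Fc) (hFe : ConvexOn ℝ Set.univ Fe)
    (hgc : ∀ x, HasGradientAt Fc (gc x) x) (hge : ∀ x, HasGradientAt Fe (ge x) x)
    (s : ℝ) (hs : 0 < s) (φk φk1 : V)
    (hscheme : φk1 = φk - s • L (gc φk1 - ge φk)) :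
    Fc φk1 - Fe φk1 ≤ Fc φk - Fe φk :=
  convex_splitting_scheme_energy_decay_general L hpos Fc Fe gc ge hFc hFe hgc hge s hs φk φk1
    hscheme
end

section
/- The discrete energy F(φ) = h_x h_y Σ_{i,j} [S(φ_{ij}) + H(φ_{ij}) + κ(φ_{ij})(a_x((D_xφ)²)_{ij} + a_y((D_yφ)²)_{ij})] admits a convex splitting F = F_c − F_e, where F_c(φ) = h_x h_y Σ_{i,j} [S(φ_{ij}) + κ(φ_{ij})(a_x((D_xφ)²)_{ij} + a_y((D_yφ)²)_{ij})] and F_e(φ) = −h_x h_y Σ_{i,j} H(φ_{ij}) are both convex on the set of periodic grid functions taking values in (0, 1/ρ). -/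
open Finset

/-- center-to-edge difference in x: value at edge (i+1/2, j). -/
noncomputable def Dx (hx : ℝ) (φ : ℤ → ℤ → ℝ) (i j : ℤ) : ℝ := (φ (i+1) j - φ i j) / hx

/-- center-to-edge difference in y: value at edge (i, j+1/2). -/
noncomputable def Dy (hy : ℝ) (φ : ℤ → ℤ → ℝ) (i j : ℤ) : ℝ := (φ i (j+1) - φ i j) / hy

/-- edge-to-center difference in x (edge function `f i j` lives at (i+1/2, j)). -/
noncomputable def dX (hx : ℝ) (f : ℤ → ℤ → ℝ) (i j : ℤ) : ℝ := (f i j - f (i-1) j) / hx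

/-- edge-to-center difference in y (edge function `g i j` lives at (i, j+1/2)). -/
noncomputable def dY (hy : ℝ) (g : ℤ → ℤ → ℝ) (i j : ℤ) : ℝ := (g i j - g i (j-1)) / hy

/-- edge-to-center average in x. -/
noncomputable def aX (f : ℤ → ℤ → ℝ) (i j : ℤ) : ℝ := (f i j + f (i-1) j) / 2

/-- edge-to-center average in y. -/
noncomputable def aY (g : ℤ → ℤ → ℝ) (i j : ℤ) : ℝ := (g i j + g i (j-1)) / 2

/-- discrete Laplacian. -/
noncomputable def lapH (hx hy : ℝ) (φ : ℤ → ℤ → ℝ) (i j : ℤ) : ℝ :=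
  dX hx (Dx hx φ) i j + dY hy (Dy hy φ) i j

/-- cell-centered weighted inner product. -/
noncomputable def ipH (m n : ℤ) (hx hy : ℝ) (φ ψ : ℤ → ℤ → ℝ) : ℝ :=
  hx * hy * ∑ i ∈ Icc (1:ℤ) m, ∑ j ∈ Icc (1:ℤ) n, φ i j * ψ i j

/-- east-west edge-centered weighted inner product. -/
noncomputable def ipEW (m n : ℤ) (hx hy : ℝ) (f g : ℤ → ℤ → ℝ) : ℝ :=
  hx * hy * ∑ i ∈ Icc (1:ℤ) m, ∑ j ∈ Icc (1:ℤ) n, aX (fun i j => f i j * g i j) i j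

/-- north-south edge-centered weighted inner product. -/
noncomputable def ipNS (m n : ℤ) (hx hy : ℝ) (f g : ℤ → ℤ → ℝ) : ℝ :=
  hx * hy * ∑ i ∈ Icc (1:ℤ) m, ∑ j ∈ Icc (1:ℤ) n, aY (fun i j => f i j * g i j) i j

/-- periodicity of a grid function with periods m, n. -/
noncomputable def GridPeriodic (m n : ℤ) (φ : ℤ → ℤ → ℝ) : Prop :=
  (∀ i j, φ (i+m) j = φ i j) ∧ (∀ i j, φ i (j+n) = φ i j)

/-!
Every term of `F_c` is a convex function of a few linear functionals of `φ`: the entropy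
`S (φ i j)`, and `κ (φ i j) * (D φ)²` at each of the four edges adjacent to the cell `(i, j)`.
`S` is a positive combination of `x ↦ x log x` composed with affine maps, and
`κ u * v² = v² / (36 u) + v² / (36 (1 - u))` is a sum of two quadratic-over-linear functions,
which are jointly convex. `F_e` is convex because `H` is a concave quadratic.
-/

open Set Real

theorem convexOn_sq_div {E : Type*} [AddCommGroup E] [Module ℝ E] (l g : E →ᵃ[ℝ] ℝ) :
    ConvexOn ℝ {x | 0 < g x} fun x => l x ^ 2 / g x := by
  refine ⟨(convex_Ioi 0).affine_preimage g, fun x hx y hy a b ha hb hab => ?_⟩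
  change 0 < g x at hx; change 0 < g y at hy
  simp only [Convex.combo_affine_apply hab, smul_eq_mul]
  have hden : 0 < a * g x + b * g y := by
    rcases ha.eq_or_lt with rfl | ha
    · simp_all
    · positivity
  rw [← sub_nonneg]
  have key : a * (l x ^ 2 / g x) + b * (l y ^ 2 / g y)
        - (a * l x + b * l y) ^ 2 / (a * g x + b * g y)
      = a * b * (l x * g y - l y * g x) ^ 2 / (g x * g y * (a * g x + b * g y)) := by
    field_simp
    ring
  rw [key]
  positivity

theorem convexOn_kappa_mul_sq :
    ConvexOn ℝ (Set.Ioo 0 1 ×ˢ Set.univ) fun p : ℝ × ℝ =>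
      1 / (36 * p.1 * (1 - p.1)) * p.2 ^ 2 := by
  let u : ℝ × ℝ →ᵃ[ℝ] ℝ := (LinearMap.fst ℝ ℝ ℝ).toAffineMap
  let v : ℝ × ℝ →ᵃ[ℝ] ℝ := (LinearMap.snd ℝ ℝ ℝ).toAffineMap
  have hdom : Convex ℝ (Set.Ioo (0 : ℝ) 1 ×ˢ (Set.univ : Set ℝ)) :=
    (convex_Ioo 0 1).prod convex_univ
  have h₀ := (convexOn_sq_div v u).subset (fun p hp => hp.1.1) hdom
  have h₁ := (convexOn_sq_div v (AffineMap.const ℝ _ 1 - u)).subset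
    (fun p hp => by simpa [u] using hp.1.2) hdom
  refine ((h₀.add h₁).smul (by norm_num : (0 : ℝ) ≤ 1 / 36)).congr fun p ⟨⟨hp₀, hp₁⟩, _⟩ => ?_
  have : 1 - p.1 ≠ 0 := by linarith
  show 1 / 36 * (p.2 ^ 2 / p.1 + p.2 ^ 2 / (1 - p.1)) = 1 / (36 * p.1 * (1 - p.1)) * p.2 ^ 2
  field_simp
  ring

theorem convexOn_mul_log_affine (p q : ℝ) :
    ConvexOn ℝ {x | 0 ≤ p * x + q} fun x => (p * x + q) * log (p * x + q) :=
  convexOn_mul_log.comp_affineMap ⟨fun x => p * x + q, p • LinearMap.id, fun x y => by simp; ring⟩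

theorem convexOn_floryHugginsEntropy {α β τ N ρ : ℝ} (hα : 0 < α) (hβ : 0 < β) (hτ : 0 < τ)
    (hN : 0 < N) (hρ : 0 < ρ) :
    ConvexOn ℝ (Ioo 0 (1 / ρ)) fun x => x / τ * log (α * x / τ) + x / N * log (β * x / τ)
      + (1 - ρ * x) * log (1 - ρ * x) := by
  have hI : Convex ℝ (Ioo 0 (1 / ρ)) := convex_Ioo _ _
  have hlin : ∀ c, 0 < c → ConvexOn ℝ (Ioo 0 (1 / ρ)) fun x => (c * x + 0) * log (c * x + 0) :=
    fun c hc => (convexOn_mul_log_affine c 0).subset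
      (fun x hx => by simpa using (mul_pos hc hx.1).le) hI
  have hsolvent : ConvexOn ℝ (Ioo 0 (1 / ρ)) fun x => (-ρ * x + 1) * log (-ρ * x + 1) :=
    (convexOn_mul_log_affine (-ρ) 1).subset
      (fun x hx => show 0 ≤ -ρ * x + 1 by linarith [(lt_div_iff₀' hρ).1 hx.2]) hI
  refine ((((hlin _ (div_pos hα hτ)).smul (inv_pos.2 hα).le).add
    ((hlin _ (div_pos hβ hτ)).smul (div_pos hτ (mul_pos hN hβ)).le)).add hsolvent).congr
    fun x _ => ?_
  simp only [add_zero, smul_eq_mul, Pi.add_apply, neg_mul, neg_add_eq_sub]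
  field_simp

theorem concaveOn_mul_one_sub_mul {χ ρ : ℝ} (hχ : 0 ≤ χ) (hρ : 0 ≤ ρ) :
    ConcaveOn ℝ univ fun x => χ * x * (1 - ρ * x) := by
  refine ⟨convex_univ, fun x _ y _ a b ha hb hab => ?_⟩
  obtain rfl : b = 1 - a := by linarith
  simp only [smul_eq_mul]
  nlinarith [mul_nonneg (mul_nonneg (mul_nonneg hχ hρ) (mul_nonneg ha hb)) (sq_nonneg (x - y))]

theorem convexOn_finset_sum {ι E : Type*} [AddCommGroup E] [Module ℝ E] {s : Set E}
    (hs : Convex ℝ s) (t : Finset ι) {f : ι → E → ℝ} (hf : ∀ i ∈ t, ConvexOn ℝ s (f i)) :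
    ConvexOn ℝ s fun x => ∑ i ∈ t, f i x :=
  ⟨hs, fun x hx y hy a b ha hb hab => by
    simp only [smul_eq_mul, mul_sum, ← sum_add_distrib]
    exact sum_le_sum fun i hi => (hf i hi).2 hx hy ha hb hab⟩

theorem convexOn_mul_sum_sum {ι ι' E : Type*} [AddCommGroup E] [Module ℝ E] {s : Set E}
    (hs : Convex ℝ s) {w : ℝ} (hw : 0 ≤ w) (A : Finset ι) (B : Finset ι')
    {f : ι → ι' → E → ℝ} (hf : ∀ i j, ConvexOn ℝ s (f i j)) :
    ConvexOn ℝ s fun x => w * ∑ i ∈ A, ∑ j ∈ B, f i j x :=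
  (convexOn_finset_sum hs A fun i _ => convexOn_finset_sum hs B fun j _ => hf i j).smul hw

def gridFunctionsIn (I : Set ℝ) : Set (ℤ → ℤ → ℝ) := {φ | ∀ i j, φ i j ∈ I}

theorem Convex.gridFunctionsIn {I : Set ℝ} (hI : Convex ℝ I) : Convex ℝ (gridFunctionsIn I) :=
  fun _ hφ _ hψ _ _ ha hb hab i j => hI (hφ i j) (hψ i j) ha hb hab

theorem convex_setOf_gridPeriodic (m n : ℤ) : Convex ℝ {φ | GridPeriodic m n φ} :=
  fun φ hφ ψ hψ a b _ _ _ =>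
    ⟨fun i j => by simp [hφ.1 i j, hψ.1 i j], fun i j => by simp [hφ.2 i j, hψ.2 i j]⟩

def gridEval (i j : ℤ) : (ℤ → ℤ → ℝ) →ₗ[ℝ] ℝ :=
  (LinearMap.proj j : (ℤ → ℝ) →ₗ[ℝ] ℝ) ∘ₗ LinearMap.proj i

noncomputable def gridDiff (h : ℝ) (i j i' j' : ℤ) : (ℤ → ℤ → ℝ) →ₗ[ℝ] ℝ :=
  h⁻¹ • (gridEval i j - gridEval i' j')

theorem ConvexOn.comp_gridEval {I : Set ℝ} {f : ℝ → ℝ} (hf : ConvexOn ℝ I f) (i j : ℤ) :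
    ConvexOn ℝ (gridFunctionsIn I) fun φ => f (φ i j) :=
  (hf.comp_linearMap (gridEval i j)).subset (fun _ hφ => hφ i j) hf.1.gridFunctionsIn

theorem convexOn_gradientEnergy {I : Set ℝ} (hI : Convex ℝ I) {κ : ℝ → ℝ}
    (hκ : ConvexOn ℝ (I ×ˢ univ) fun p => κ p.1 * p.2 ^ 2) (hx hy : ℝ) (i j : ℤ) :
    ConvexOn ℝ (gridFunctionsIn I) fun φ => κ (φ i j) *
      (aX (fun i j => Dx hx φ i j ^ 2) i j + aY (fun i j => Dy hy φ i j ^ 2) i j) := by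
  have hK : ∀ ℓ : (ℤ → ℤ → ℝ) →ₗ[ℝ] ℝ,
      ConvexOn ℝ (gridFunctionsIn I) fun φ => κ (φ i j) * ℓ φ ^ 2 := fun ℓ =>
    (hκ.comp_linearMap ((gridEval i j).prod ℓ)).subset (fun φ hφ => ⟨hφ i j, trivial⟩)
      hI.gridFunctionsIn
  refine ((((hK (gridDiff hx (i + 1) j i j)).add (hK (gridDiff hx i j (i - 1) j))).add
    ((hK (gridDiff hy i (j + 1) i j)).add (hK (gridDiff hy i j i (j - 1))))).smul
    (by norm_num : (0 : ℝ) ≤ 1 / 2)).congr fun φ _ => ?_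
  simp only [gridDiff, gridEval, LinearMap.smul_apply, LinearMap.sub_apply, LinearMap.coe_comp,
    LinearMap.coe_proj, Function.comp_apply, Function.eval, smul_eq_mul, Pi.add_apply, aX, Dx,
    aY, Dy, sub_add_cancel]
  ring

theorem discrete_energy_convex_splitting_general
    (m n : ℤ)
    (hx hy : ℝ) (hhx : 0 < hx) (hhy : 0 < hy)
    (α β τ N χ ρ : ℝ) (hα : 0 < α) (hβ : 0 < β) (hτ : 0 < τ)
    (hN : 0 < N) (hχ : 0 < χ) (hρ : 1 < ρ)
    (S H κ : ℝ → ℝ)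
    (hS : S = fun φ => φ/τ * Real.log (α*φ/τ) + φ/N * Real.log (β*φ/τ)
        + (1 - ρ*φ) * Real.log (1 - ρ*φ))
    (hH : H = fun φ => χ * φ * (1 - ρ*φ))
    (hκ : κ = fun φ => 1 / (36 * φ * (1 - φ)))
    (F Fc Fe : (ℤ → ℤ → ℝ) → ℝ)
    (hF : F = fun φ => hx * hy * ∑ i ∈ Finset.Icc (1:ℤ) m, ∑ j ∈ Finset.Icc (1:ℤ) n,
        (S (φ i j) + H (φ i j)
          + κ (φ i j) * (aX (fun i j => (Dx hx φ i j)^2) i j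
                        + aY (fun i j => (Dy hy φ i j)^2) i j)))
    (hFc : Fc = fun φ => hx * hy * ∑ i ∈ Finset.Icc (1:ℤ) m, ∑ j ∈ Finset.Icc (1:ℤ) n,
        (S (φ i j)
          + κ (φ i j) * (aX (fun i j => (Dx hx φ i j)^2) i j
                        + aY (fun i j => (Dy hy φ i j)^2) i j)))
    (hFe : Fe = fun φ => -(hx * hy * ∑ i ∈ Finset.Icc (1:ℤ) m, ∑ j ∈ Finset.Icc (1:ℤ) n,
        H (φ i j)))
    (Dset : Set (ℤ → ℤ → ℝ))
    (hDset : Dset = {φ | GridPeriodic m n φ ∧ ∀ i j, φ i j ∈ Set.Ioo (0:ℝ) (1/ρ)}) :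
    (∀ φ ∈ Dset, F φ = Fc φ - Fe φ) ∧
    ConvexOn ℝ Dset Fc ∧ ConvexOn ℝ Dset Fe := by
  subst hS hH hκ hF hFc hFe hDset
  have hρ₀ : 0 < ρ := by linarith
  have hI : Convex ℝ (Ioo 0 (1 / ρ)) := convex_Ioo _ _
  have hD := (convex_setOf_gridPeriodic m n).inter hI.gridFunctionsIn
  have hw : 0 ≤ hx * hy := by positivity
  have hsub : {φ | GridPeriodic m n φ ∧ ∀ i j, φ i j ∈ Ioo 0 (1 / ρ)} ⊆
      gridFunctionsIn (Ioo 0 (1 / ρ)) := fun _ hφ => hφ.2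
  have hK := convexOn_kappa_mul_sq.subset
    (prod_mono (Ioo_subset_Ioo_right ((div_le_one hρ₀).2 hρ.le)) subset_rfl)
    (hI.prod convex_univ)
  refine ⟨fun φ _ => ?_, ?_, ?_⟩
  · simp only [sub_neg_eq_add, ← mul_add, ← sum_add_distrib, add_right_comm]
  · refine (convexOn_mul_sum_sum hI.gridFunctionsIn hw _ _ fun i j => ?_).subset hsub hD
    exact ((convexOn_floryHugginsEntropy hα hβ hτ hN hρ₀).comp_gridEval i j).add
      (convexOn_gradientEnergy (κ := fun u => 1 / (36 * u * (1 - u))) hI hK hx hy i j)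
  · refine ((convexOn_mul_sum_sum hI.gridFunctionsIn hw (Icc 1 m) (Icc 1 n) fun i j =>
      ((concaveOn_mul_one_sub_mul hχ.le hρ₀.le).neg.subset (subset_univ _) hI).comp_gridEval
        i j).subset hsub hD).congr fun φ _ => ?_
    simp [sum_neg_distrib]

theorem discrete_energy_convex_splitting
    (m n : ℤ) (hm : 0 < m) (hn : 0 < n)
    (hx hy : ℝ) (hhx : 0 < hx) (hhy : 0 < hy)
    (α β τ N χ ρ : ℝ) (hα : 0 < α) (hβ : 0 < β) (hτ : 0 < τ)
    (hN : 0 < N) (hχ : 0 < χ) (hρ : 1 < ρ)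
    (S H κ : ℝ → ℝ)
    (hS : S = fun φ => φ/τ * Real.log (α*φ/τ) + φ/N * Real.log (β*φ/τ)
        + (1 - ρ*φ) * Real.log (1 - ρ*φ))
    (hH : H = fun φ => χ * φ * (1 - ρ*φ))
    (hκ : κ = fun φ => 1 / (36 * φ * (1 - φ)))
    (F Fc Fe : (ℤ → ℤ → ℝ) → ℝ)
    (hF : F = fun φ => hx * hy * ∑ i ∈ Finset.Icc (1:ℤ) m, ∑ j ∈ Finset.Icc (1:ℤ) n,
        (S (φ i j) + H (φ i j)
          + κ (φ i j) * (aX (fun i j => (Dx hx φ i j)^2) i j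
                        + aY (fun i j => (Dy hy φ i j)^2) i j)))
    (hFc : Fc = fun φ => hx * hy * ∑ i ∈ Finset.Icc (1:ℤ) m, ∑ j ∈ Finset.Icc (1:ℤ) n,
        (S (φ i j)
          + κ (φ i j) * (aX (fun i j => (Dx hx φ i j)^2) i j
                        + aY (fun i j => (Dy hy φ i j)^2) i j)))
    (hFe : Fe = fun φ => -(hx * hy * ∑ i ∈ Finset.Icc (1:ℤ) m, ∑ j ∈ Finset.Icc (1:ℤ) n,
        H (φ i j)))
    (Dset : Set (ℤ → ℤ → ℝ))
    (hDset : Dset = {φ | GridPeriodic m n φ ∧ ∀ i j, φ i j ∈ Set.Ioo (0:ℝ) (1/ρ)}) :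
    (∀ φ ∈ Dset, F φ = Fc φ - Fe φ) ∧
    ConvexOn ℝ Dset Fc ∧ ConvexOn ℝ Dset Fe :=
  discrete_energy_convex_splitting_general m n hx hy hhx hhy α β τ N χ ρ hα hβ hτ hN hχ hρ S H κ hS
    hH hκ F Fc Fe hF hFc hFe Dset hDset
end
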